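/- arXiv:2003.04408 — 2 statements merged into one kernel-verified Lean document; each statement's English description precedes it below -/
import Mathlib

section
/- With the same sub-Gaussian upper bound on p_t as above and s = d_h/d_w, there exists C > 0 such that for all x ≠ y in K with d(x,y) ≤ diam(K), ∫₀¹ t^{s-1} p_t(x,y) dt ≤ C·(1 + |ln d(x,y)|). -/
open MeasureTheory Set Metric
open intervalIntegral in

theorem stmt_2 {K : Type*} [MetricSpace K] [CompactSpace K] (p : ℝ → K → K → ℝ)
    (dh dw c₃ c₄ : ℝ) (hdh : 1 ≤ dh) (hdw : dh < dw)
    (hc₃ : 0 < c₃) (hc₄ : 0 < c₄)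
    (hnonneg : ∀ t x y, 0 ≤ p t x y)
    (hub : ∀ t, 0 < t → t < 1 → ∀ x y : K,
      p t x y ≤ c₃ * t ^ (-(dh / dw)) *
        Real.exp (-c₄ * (dist x y ^ dw / t) ^ (1 / (dw - 1))))
    (s : ℝ) (hs : s = dh / dw) :
    ∃ C : ℝ, 0 < C ∧ ∀ x y : K, x ≠ y → dist x y ≤ diam (univ : Set K) →
      ∫⁻ t in Ioo (0 : ℝ) 1, ENNReal.ofReal (t ^ (s - 1) * p t x y) ≤
        ENNReal.ofReal (C * (1 + |Real.log (dist x y)|)) := by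
  have hdw1 : 1 < dw := lt_of_le_of_lt hdh hdw
  have hdw1' : 0 < dw - 1 := by linarith
  set α : ℝ := 1 / (dw - 1) with hαdef
  have hα : 0 < α := by positivity
  refine ⟨c₃ * (dw - 1) / c₄ + c₃ * dw, by positivity, ?_⟩
  intro x y hxy hdiam
  set r := dist x y with hrdef
  have hr0 : 0 < r := dist_pos.2 hxy
  set a := r ^ dw with hadef
  have ha0 : 0 < a := Real.rpow_pos_of_pos hr0 dw
  set b := min a 1 with hbdef
  have hb0 : 0 < b := lt_min ha0 one_pos
  have hb1 : b ≤ 1 := min_le_right _ _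
  have hba : b ≤ a := min_le_left _ _
  have haα : 0 < a ^ α := Real.rpow_pos_of_pos ha0 α
  -- pointwise bound on (0, b)
  have key1 : ∀ t ∈ Ioo (0:ℝ) b, t ^ (s - 1) * p t x y ≤ c₃ / (c₄ * a ^ α) * t ^ (α - 1) := by
    rintro t ⟨ht0, htb⟩
    have ht1 : t < 1 := lt_of_lt_of_le htb hb1
    have htα : 0 < t ^ α := Real.rpow_pos_of_pos ht0 α
    have hu : (a / t) ^ α = a ^ α / t ^ α := Real.div_rpow ha0.le ht0.le _
    have hu0 : 0 < c₄ * (a ^ α / t ^ α) := by positivity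
    have hE : Real.exp (-c₄ * (r ^ dw / t) ^ (1 / (dw - 1))) ≤ (c₄ * (a ^ α / t ^ α))⁻¹ := by
      rw [← hadef, ← hαdef, hu, neg_mul]
      have hx := Real.add_one_le_exp (c₄ * (a ^ α / t ^ α))
      have h2 : c₄ * (a ^ α / t ^ α) ≤ Real.exp (c₄ * (a ^ α / t ^ α)) := by linarith
      calc Real.exp (-(c₄ * (a ^ α / t ^ α)))
          = (Real.exp (c₄ * (a ^ α / t ^ α)))⁻¹ := by rw [Real.exp_neg]
        _ ≤ (c₄ * (a ^ α / t ^ α))⁻¹ := inv_anti₀ hu0 h2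
    calc t ^ (s - 1) * p t x y
        ≤ t ^ (s - 1) * (c₃ * t ^ (-(dh / dw)) *
            Real.exp (-c₄ * (r ^ dw / t) ^ (1 / (dw - 1)))) :=
          mul_le_mul_of_nonneg_left (hub t ht0 ht1 x y) (Real.rpow_nonneg ht0.le _)
      _ = c₃ * t⁻¹ * Real.exp (-c₄ * (r ^ dw / t) ^ (1 / (dw - 1))) := by
          rw [hs, show ∀ E : ℝ, t ^ (dh / dw - 1) * (c₃ * t ^ (-(dh / dw)) * E)
              = c₃ * (t ^ (dh / dw - 1) * t ^ (-(dh / dw))) * E from fun E => by ring,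
            ← Real.rpow_add ht0, show dh / dw - 1 + -(dh / dw) = -1 by ring,
            Real.rpow_neg_one]
      _ ≤ c₃ * t⁻¹ * (c₄ * (a ^ α / t ^ α))⁻¹ :=
          mul_le_mul_of_nonneg_left hE (by positivity)
      _ = c₃ / (c₄ * a ^ α) * t ^ (α - 1) := by
          rw [Real.rpow_sub ht0, Real.rpow_one]
          field_simp
  -- pointwise bound on [b, 1)
  have key2 : ∀ t ∈ Ico b (1:ℝ), t ^ (s - 1) * p t x y ≤ c₃ * t⁻¹ := by
    rintro t ⟨hbt, ht1⟩
    have ht0 : 0 < t := lt_of_lt_of_le hb0 hbt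
    have hE : Real.exp (-c₄ * (r ^ dw / t) ^ (1 / (dw - 1))) ≤ 1 := by
      apply Real.exp_le_one_iff.2
      have h : 0 ≤ (r ^ dw / t) ^ (1 / (dw - 1)) := Real.rpow_nonneg (by positivity) _
      nlinarith
    calc t ^ (s - 1) * p t x y
        ≤ t ^ (s - 1) * (c₃ * t ^ (-(dh / dw)) *
            Real.exp (-c₄ * (r ^ dw / t) ^ (1 / (dw - 1)))) :=
          mul_le_mul_of_nonneg_left (hub t ht0 ht1 x y) (Real.rpow_nonneg ht0.le _)
      _ ≤ t ^ (s - 1) * (c₃ * t ^ (-(dh / dw)) * 1) := by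
          apply mul_le_mul_of_nonneg_left _ (Real.rpow_nonneg ht0.le _)
          exact mul_le_mul_of_nonneg_left hE (by positivity)
      _ = c₃ * (t ^ (s - 1) * t ^ (-(dh / dw))) := by ring
      _ = c₃ * t⁻¹ := by
          rw [← Real.rpow_add ht0, hs, show dh / dw - 1 + -(dh / dw) = -1 by ring,
            Real.rpow_neg_one]
  -- split
  have hsplit : Ioo (0:ℝ) 1 = Ioo 0 b ∪ Ico b 1 := (Ioo_union_Ico_eq_Ioo hb0 hb1).symm
  have hmeas1 : Measurable fun t : ℝ => ENNReal.ofReal (c₃ / (c₄ * a ^ α) * t ^ (α - 1)) := by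
    fun_prop
  have hmeas2 : Measurable fun t : ℝ => ENNReal.ofReal (c₃ * t⁻¹) := by fun_prop
  -- first piece
  have hint1 : IntegrableOn (fun t : ℝ => c₃ / (c₄ * a ^ α) * t ^ (α - 1)) (Ioo 0 b) := by
    apply Integrable.const_mul
    have h := intervalIntegrable_rpow' (r := α - 1) (a := 0) (b := b)
      (by linarith)
    exact ((intervalIntegrable_iff_integrableOn_Ioc_of_le hb0.le).mp h).mono_set
      Ioo_subset_Ioc_self
  have hval1 : ∫ t in Ioo (0:ℝ) b, c₃ / (c₄ * a ^ α) * t ^ (α - 1)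
      = c₃ / (c₄ * a ^ α) * (b ^ α / α) := by
    rw [MeasureTheory.integral_const_mul]
    congr 1
    rw [← MeasureTheory.integral_Ioc_eq_integral_Ioo,
      ← integral_of_le hb0.le,
      integral_rpow (Or.inl (by linarith)),
      show α - 1 + 1 = α by ring, Real.zero_rpow hα.ne']
    ring
  have hI1 : ∫⁻ t in Ioo (0:ℝ) b, ENNReal.ofReal (t ^ (s - 1) * p t x y)
      ≤ ENNReal.ofReal (c₃ * (dw - 1) / c₄) := by
    calc ∫⁻ t in Ioo (0:ℝ) b, ENNReal.ofReal (t ^ (s - 1) * p t x y)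
        ≤ ∫⁻ t in Ioo (0:ℝ) b, ENNReal.ofReal (c₃ / (c₄ * a ^ α) * t ^ (α - 1)) := by
          apply setLIntegral_mono hmeas1
          intro t ht
          exact ENNReal.ofReal_le_ofReal (key1 t ht)
      _ = ENNReal.ofReal (∫ t in Ioo (0:ℝ) b, c₃ / (c₄ * a ^ α) * t ^ (α - 1)) := by
          rw [MeasureTheory.ofReal_integral_eq_lintegral_ofReal hint1]
          filter_upwards [ae_restrict_mem measurableSet_Ioo] with t ht
          have h : 0 < t ^ (α - 1) := Real.rpow_pos_of_pos ht.1 _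
          positivity
      _ ≤ ENNReal.ofReal (c₃ * (dw - 1) / c₄) := by
          apply ENNReal.ofReal_le_ofReal
          rw [hval1]
          have hbα : b ^ α ≤ a ^ α := Real.rpow_le_rpow hb0.le hba hα.le
          calc c₃ / (c₄ * a ^ α) * (b ^ α / α) ≤ c₃ / (c₄ * a ^ α) * (a ^ α / α) := by
                gcongr
            _ = c₃ * (dw - 1) / c₄ := by
                rw [hαdef]; field_simp
  -- second piece
  have hint2 : IntegrableOn (fun t : ℝ => c₃ * t⁻¹) (Ioc b 1) := by
    apply Integrable.const_mul
    have h : IntervalIntegrable (fun t : ℝ => t⁻¹) volume b 1 := by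
      apply intervalIntegrable_inv _ continuousOn_id
      intro t ht
      rw [uIcc_of_le hb1] at ht
      exact (lt_of_lt_of_le hb0 ht.1).ne'
    exact (intervalIntegrable_iff_integrableOn_Ioc_of_le hb1).mp h
  have hval2 : ∫ t in Ioc b (1:ℝ), c₃ * t⁻¹ = c₃ * (-Real.log b) := by
    rw [MeasureTheory.integral_const_mul]
    congr 1
    rw [← integral_of_le hb1, integral_inv]
    · rw [one_div, Real.log_inv]
    · rw [uIcc_of_le hb1]
      intro h
      exact absurd h.1 (not_le.2 hb0)
  have hI2 : ∫⁻ t in Ico b (1:ℝ), ENNReal.ofReal (t ^ (s - 1) * p t x y)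
      ≤ ENNReal.ofReal (c₃ * dw * |Real.log r|) := by
    calc ∫⁻ t in Ico b (1:ℝ), ENNReal.ofReal (t ^ (s - 1) * p t x y)
        ≤ ∫⁻ t in Ico b (1:ℝ), ENNReal.ofReal (c₃ * t⁻¹) := by
          apply setLIntegral_mono hmeas2
          intro t ht
          exact ENNReal.ofReal_le_ofReal (key2 t ht)
      _ = ∫⁻ t in Ioc b (1:ℝ), ENNReal.ofReal (c₃ * t⁻¹) := by
          apply setLIntegral_congr
          exact Ico_ae_eq_Ioc
      _ = ENNReal.ofReal (∫ t in Ioc b (1:ℝ), c₃ * t⁻¹) := by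
          rw [MeasureTheory.ofReal_integral_eq_lintegral_ofReal hint2]
          filter_upwards [ae_restrict_mem measurableSet_Ioc] with t ht
          have h : 0 < t := lt_of_lt_of_le hb0 ht.1.le
          positivity
      _ ≤ ENNReal.ofReal (c₃ * dw * |Real.log r|) := by
          apply ENNReal.ofReal_le_ofReal
          rw [hval2]
          have hlog : -Real.log b ≤ dw * |Real.log r| := by
            rcases min_cases a 1 with ⟨hmin, _⟩ | ⟨hmin, _⟩
            · rw [hbdef, hmin, hadef, Real.log_rpow hr0]
              calc -(dw * Real.log r) = dw * (-Real.log r) := by ring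
                _ ≤ dw * |Real.log r| :=
                  mul_le_mul_of_nonneg_left (neg_le_abs _) (by linarith)
            · rw [hbdef, hmin, Real.log_one, neg_zero]
              positivity
          calc c₃ * (-Real.log b) ≤ c₃ * (dw * |Real.log r|) :=
                mul_le_mul_of_nonneg_left hlog hc₃.le
            _ = c₃ * dw * |Real.log r| := by ring
  -- combine
  calc ∫⁻ t in Ioo (0:ℝ) 1, ENNReal.ofReal (t ^ (s - 1) * p t x y)
      = ∫⁻ t in Ioo 0 b ∪ Ico b 1, ENNReal.ofReal (t ^ (s - 1) * p t x y) := by rw [hsplit]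
    _ ≤ (∫⁻ t in Ioo (0:ℝ) b, ENNReal.ofReal (t ^ (s - 1) * p t x y))
        + ∫⁻ t in Ico b (1:ℝ), ENNReal.ofReal (t ^ (s - 1) * p t x y) :=
        lintegral_union_le _ _ _
    _ ≤ ENNReal.ofReal (c₃ * (dw - 1) / c₄) + ENNReal.ofReal (c₃ * dw * |Real.log r|) :=
        add_le_add hI1 hI2
    _ = ENNReal.ofReal (c₃ * (dw - 1) / c₄ + c₃ * dw * |Real.log r|) := by
        rw [← ENNReal.ofReal_add (by positivity) (by positivity)]
    _ ≤ ENNReal.ofReal ((c₃ * (dw - 1) / c₄ + c₃ * dw) * (1 + |Real.log r|)) := by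
        apply ENNReal.ofReal_le_ofReal
        have h1 : 0 ≤ |Real.log r| := abs_nonneg _
        nlinarith [mul_pos hc₃ (show (0:ℝ) < dw by linarith), div_nonneg (mul_nonneg hc₃.le hdw1'.le) hc₄.le]
end

section
/- Let G_s(x,y) = Γ(s)^{-1} ∫₀^∞ t^{s-1}(p_t(x,y) − 1) dt, where p_t satisfies the sub-Gaussian upper bound p_t(x,y) ≤ c₃ t^{-d_h/d_w} exp(-c₄(d(x,y)^{d_w}/t)^{1/(d_w-1)}) for 0 < t < 1 and |p_t(x,y) − 1| ≤ C₀ e^{-λ₁ t} for t ≥ 1. If 0 < s < d_h/d_w, then there exists C > 0 such that |G_s(x,y)| ≤ C · d(x,y)^{s d_w − d_h} for all x ≠ y in K. -/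
open MeasureTheory Set

private lemma exp_aux {x : ℝ} (hx : 0 ≤ x) (n : ℕ) (hn : 0 < n) :
    x ^ n ≤ (n : ℝ) ^ n * Real.exp x := by
  have hn' : (0:ℝ) < (n:ℝ) := by exact_mod_cast hn
  have h1 : (x / n) ^ n ≤ (x / n + 1) ^ n :=
    pow_le_pow_left₀ (by positivity) (by linarith [div_nonneg hx hn'.le]) n
  have h2 : (x / n + 1) ^ n ≤ Real.exp (x / n) ^ n :=
    pow_le_pow_left₀ (by positivity) (by linarith [Real.add_one_le_exp (x / n)]) n
  have h3 : Real.exp (x / n) ^ n = Real.exp x := by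
    rw [← Real.exp_nat_mul, mul_div_cancel₀ _ hn'.ne']
  have h := h1.trans (h2.trans_eq h3)
  rw [div_pow, div_le_iff₀ (by positivity)] at h
  calc x ^ n ≤ Real.exp x * (n:ℝ)^n := h
    _ = (n:ℝ)^n * Real.exp x := by ring

private lemma exp_neg_le {x : ℝ} (hx : 0 < x) (n : ℕ) (hn : 0 < n) :
    Real.exp (-x) ≤ (n : ℝ) ^ n * x ^ (-(n:ℝ)) := by
  have h := exp_aux hx.le n hn
  have hxn : (0:ℝ) < x ^ n := by positivity
  rw [Real.exp_neg, Real.rpow_neg hx.le, Real.rpow_natCast,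
    inv_eq_one_div, inv_eq_one_div, mul_one_div,
    div_le_div_iff₀ (Real.exp_pos x) hxn, one_mul]
  linarith

private lemma key_continuousOn {ν γ c A : ℝ} (hA : 0 < A) :
    ContinuousOn (fun t : ℝ => t ^ (-ν - 1) * Real.exp (-c * (A / t) ^ γ)) (Ioi 0) := by
  apply ContinuousOn.mul
  · exact ContinuousOn.rpow_const continuousOn_id (fun t ht => Or.inl (ne_of_gt ht))
  · apply Real.continuous_exp.comp_continuousOn
    apply ContinuousOn.mul continuousOn_const
    apply ContinuousOn.rpow_const
    · exact continuousOn_const.div continuousOn_id (fun t ht => ne_of_gt ht)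
    · exact fun t ht => Or.inl (ne_of_gt (div_pos hA ht))

private lemma key_integrable {ν γ c A : ℝ} (hν : 0 < ν) (hγ : 0 < γ) (hc : 0 < c)
    (hA : 0 < A) :
    IntegrableOn (fun t : ℝ => t ^ (-ν - 1) * Real.exp (-c * (A / t) ^ γ)) (Ioi 0) := by
  have hcont := key_continuousOn (ν := ν) (γ := γ) (c := c) hA
  rw [← Ioc_union_Ioi_eq_Ioi (zero_le_one : (0:ℝ) ≤ 1)]
  apply IntegrableOn.union
  · -- on Ioc 0 1
    set n : ℕ := ⌈ν / γ⌉₊ + 1 with hn_def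
    have hn : 0 < n := Nat.succ_pos _
    have hνn : ν < γ * n := by
      have h1 : ν / γ < (n:ℝ) := by
        have := Nat.le_ceil (ν / γ)
        have h2 : ((⌈ν / γ⌉₊ : ℝ)) < (n:ℝ) := by exact_mod_cast Nat.lt_succ_self _
        linarith
      calc ν = γ * (ν / γ) := by field_simp
        _ < γ * n := by exact mul_lt_mul_of_pos_left h1 hγ
    set M : ℝ := (n:ℝ)^n * c ^ (-(n:ℝ)) * A ^ (γ * (-(n:ℝ))) with hM_def
    have hM : 0 < M := by positivity
    apply Integrable.mono' (g := fun t => M * t ^ (-ν - 1 + γ * n))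
    · exact ((intervalIntegral.intervalIntegrable_rpow'
        (by linarith : (-1:ℝ) < -ν - 1 + γ * n)).1.const_mul M)
    · exact (hcont.mono Ioc_subset_Ioi_self).aestronglyMeasurable measurableSet_Ioc
    · refine (ae_restrict_iff' measurableSet_Ioc).2 (Filter.Eventually.of_forall ?_)
      intro t ht
      have ht0 : 0 < t := ht.1
      have hAt : 0 < A / t := div_pos hA ht0
      have hz : 0 < (A / t) ^ γ := Real.rpow_pos_of_pos hAt γ
      have hb : Real.exp (-c * (A / t) ^ γ) ≤ (n:ℝ)^n * (c * (A / t) ^ γ) ^ (-(n:ℝ)) := by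
        rw [neg_mul]
        exact exp_neg_le (by positivity) n hn
      have heq : (c * (A / t) ^ γ) ^ (-(n:ℝ))
          = c ^ (-(n:ℝ)) * A ^ (γ * (-(n:ℝ))) * t ^ (-(γ * (-(n:ℝ)))) := by
        rw [Real.mul_rpow hc.le hz.le, ← Real.rpow_mul hAt.le,
          Real.div_rpow hA.le ht0.le, div_eq_mul_inv, ← Real.rpow_neg ht0.le, mul_assoc]
      have hnn : ‖t ^ (-ν - 1) * Real.exp (-c * (A / t) ^ γ)‖
          = t ^ (-ν - 1) * Real.exp (-c * (A / t) ^ γ) := by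
        rw [Real.norm_eq_abs, abs_of_nonneg (by positivity)]
      rw [hnn]
      calc t ^ (-ν - 1) * Real.exp (-c * (A / t) ^ γ)
          ≤ t ^ (-ν - 1) * ((n:ℝ)^n * (c * (A / t) ^ γ) ^ (-(n:ℝ))) := by
            apply mul_le_mul_of_nonneg_left hb (by positivity)
        _ = M * (t ^ (-ν - 1) * t ^ (-(γ * (-(n:ℝ))))) := by rw [heq, hM_def]; ring
        _ = M * t ^ (-ν - 1 + γ * n) := by
            rw [← Real.rpow_add ht0]; norm_num
  · -- on Ioi 1
    apply Integrable.mono' (integrableOn_Ioi_rpow_of_lt (by linarith : -ν - 1 < -1) one_pos)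
    · exact (hcont.mono (Ioi_subset_Ioi zero_le_one)).aestronglyMeasurable measurableSet_Ioi
    · refine (ae_restrict_iff' measurableSet_Ioi).2 (Filter.Eventually.of_forall ?_)
      intro t ht
      have ht0 : (0:ℝ) < t := lt_trans one_pos ht
      have hAt : 0 ≤ (A / t) ^ γ := Real.rpow_nonneg (div_pos hA ht0).le γ
      have h1 : Real.exp (-c * (A / t) ^ γ) ≤ 1 :=
        Real.exp_le_one_iff.2 (by nlinarith)
      have hnn : ‖t ^ (-ν - 1) * Real.exp (-c * (A / t) ^ γ)‖
          = t ^ (-ν - 1) * Real.exp (-c * (A / t) ^ γ) := by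
        rw [Real.norm_eq_abs, abs_of_nonneg (by positivity)]
      rw [hnn]
      calc t ^ (-ν - 1) * Real.exp (-c * (A / t) ^ γ)
          ≤ t ^ (-ν - 1) * 1 := mul_le_mul_of_nonneg_left h1 (by positivity)
        _ = t ^ (-ν - 1) := mul_one _

private lemma key_value {ν γ c A : ℝ} (hν : 0 < ν) (hγ : 0 < γ) (hc : 0 < c) (hA : 0 < A) :
    ∫ t in Ioi (0:ℝ), t ^ (-ν - 1) * Real.exp (-c * (A / t) ^ γ)
      = (c * A ^ γ) ^ (-ν / γ) * (1 / γ) * Real.Gamma (ν / γ) := by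
  have h2 := integral_rpow_mul_exp_neg_mul_rpow hγ (q := ν - 1) (by linarith)
    (b := c * A ^ γ) (by positivity)
  rw [show ν - 1 + 1 = ν by ring] at h2
  rw [← h2, ← integral_comp_rpow_Ioi
    (fun t => t ^ (-ν - 1) * Real.exp (-c * (A / t) ^ γ)) (p := -1) (by norm_num)]
  apply setIntegral_congr_fun measurableSet_Ioi
  intro x hx
  have hx0 : (0:ℝ) < x := hx
  simp only [smul_eq_mul, abs_neg, abs_one, one_mul]
  have h3 : x ^ (-1 : ℝ) = x⁻¹ := by
    rw [Real.rpow_neg hx0.le, Real.rpow_one]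
  have h4 : (x⁻¹ : ℝ) ^ (-ν - 1) = x ^ (ν + 1) := by
    rw [← Real.rpow_neg_one x, ← Real.rpow_mul hx0.le]
    congr 1; ring
  have h5 : A / x⁻¹ = A * x := by field_simp
  rw [h3, h4, h5, Real.mul_rpow hA.le hx0.le]
  have h6 : x ^ (-1 - 1 : ℝ) * x ^ (ν + 1) = x ^ (ν - 1) := by
    rw [← Real.rpow_add hx0]; congr 1; ring
  calc x ^ (-1 - 1 : ℝ) * (x ^ (ν + 1) * Real.exp (-c * (A ^ γ * x ^ γ)))
      = x ^ (-1 - 1 : ℝ) * x ^ (ν + 1) * Real.exp (-(c * A ^ γ) * x ^ γ) := by ring_nf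
    _ = x ^ (ν - 1) * Real.exp (-(c * A ^ γ) * x ^ γ) := by rw [h6]

set_option maxHeartbeats 1600000 in
theorem stmt_8 {K : Type*} [MetricSpace K] [CompactSpace K] (p : ℝ → K → K → ℝ)
    (dh dw c₃ c₄ C₀ lam₁ : ℝ) (hdh : 1 ≤ dh) (hdw : dh < dw)
    (hc₃ : 0 < c₃) (hc₄ : 0 < c₄) (hC₀ : 0 < C₀) (hlam₁ : 0 < lam₁)
    (hnonneg : ∀ t x y, 0 ≤ p t x y)
    (hub : ∀ t, 0 < t → t < 1 → ∀ x y : K,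
      p t x y ≤ c₃ * t ^ (-(dh / dw)) *
        Real.exp (-c₄ * (dist x y ^ dw / t) ^ (1 / (dw - 1))))
    (htail : ∀ t : ℝ, 1 ≤ t → ∀ x y : K, |p t x y - 1| ≤ C₀ * Real.exp (-lam₁ * t))
    (s : ℝ) (hs : 0 < s) (hs' : s < dh / dw)
    (G : K → K → ℝ)
    (hG : ∀ x y : K, G x y =
      (Real.Gamma s)⁻¹ * ∫ t in Ioi (0 : ℝ), t ^ (s - 1) * (p t x y - 1)) :
    ∃ C : ℝ, 0 < C ∧ ∀ x y : K, x ≠ y →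
      |G x y| ≤ C * dist x y ^ (s * dw - dh) := by
  by_cases hK : ∃ a b : K, a ≠ b
  swap
  · refine ⟨1, one_pos, fun x y hxy => absurd ⟨x, y, hxy⟩ hK⟩
  obtain ⟨a, b, hab⟩ := hK
  have hbdd : Bornology.IsBounded (univ : Set K) := isCompact_univ.isBounded
  set D := Metric.diam (univ : Set K) with hD_def
  have hrD : ∀ x y : K, dist x y ≤ D :=
    fun x y => Metric.dist_le_diam_of_mem hbdd trivial trivial
  have hD : 0 < D := lt_of_lt_of_le (dist_pos.2 hab) (hrD a b)
  have hdw1 : (1:ℝ) < dw := lt_of_le_of_lt hdh hdw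
  have hdw0 : (0:ℝ) < dw := by linarith
  set γ : ℝ := 1 / (dw - 1) with hγ_def
  have hγ : 0 < γ := by rw [hγ_def]; exact div_pos one_pos (by linarith)
  set ν : ℝ := dh / dw - s with hν_def
  have hν : 0 < ν := by rw [hν_def]; linarith
  have hΓs : 0 < Real.Gamma s := Real.Gamma_pos_of_pos hs
  have hΓν : 0 < Real.Gamma (ν / γ) := Real.Gamma_pos_of_pos (by positivity)
  set K₁ : ℝ := c₄ ^ (-ν / γ) * (1 / γ) * Real.Gamma (ν / γ) with hK₁_def
  have hK₁ : 0 < K₁ := by rw [hK₁_def]; positivity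
  set K₂ : ℝ := 1 / s + C₀ / lam₁ with hK₂_def
  have hK₂ : 0 < K₂ := by rw [hK₂_def]; positivity
  have he : s * dw - dh < 0 := by
    have := (lt_div_iff₀ hdw0).1 hs'
    linarith
  refine ⟨(Real.Gamma s)⁻¹ * (c₃ * K₁ + K₂ * D ^ (dh - s * dw)), by positivity, ?_⟩
  intro x y hxy
  set r : ℝ := dist x y with hr_def
  have hr : 0 < r := dist_pos.2 hxy
  set A : ℝ := r ^ dw with hA_def
  have hA : 0 < A := Real.rpow_pos_of_pos hr dw
  have hs1 : s < 1 := lt_trans hs' ((div_lt_one hdw0).2 hdw)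
  -- the dominating function
  set f₁ : ℝ → ℝ := fun t => t ^ (-ν - 1) * Real.exp (-c₄ * (A / t) ^ γ) with hf₁_def
  set f₂ : ℝ → ℝ := indicator (Ioc (0:ℝ) 1) (fun t => t ^ (s - 1)) with hf₂_def
  set f₃ : ℝ → ℝ := fun t => C₀ * Real.exp (-lam₁ * t) with hf₃_def
  have hf₂_nonneg : ∀ t, 0 ≤ f₂ t := by
    intro t
    simp only [hf₂_def]
    exact indicator_nonneg (fun u hu => Real.rpow_nonneg hu.1.le _) t
  have hI₁ : IntegrableOn f₁ (Ioi 0) := key_integrable hν hγ hc₄ hA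
  have hI₂ : Integrable f₂ := by
    simp only [hf₂_def]
    rw [integrable_indicator_iff measurableSet_Ioc]
    exact (intervalIntegral.intervalIntegrable_rpow' (by linarith : (-1:ℝ) < s - 1)).1
  have hI₃ : IntegrableOn f₃ (Ioi 0) :=
    (exp_neg_integrableOn_Ioi 0 hlam₁).const_mul C₀
  set g : ℝ → ℝ := fun t => c₃ * f₁ t + f₂ t + f₃ t with hg_def
  have hg_int : IntegrableOn g (Ioi 0) :=
    ((hI₁.const_mul c₃).add hI₂.integrableOn).add hI₃
  -- pointwise bound
  have hpt : ∀ t ∈ Ioi (0:ℝ), ‖t ^ (s - 1) * (p t x y - 1)‖ ≤ g t := by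
    intro t ht
    have ht0 : (0:ℝ) < t := ht
    have htp : 0 ≤ t ^ (s - 1) := Real.rpow_nonneg ht0.le _
    have hnorm : ‖t ^ (s - 1) * (p t x y - 1)‖ = t ^ (s - 1) * |p t x y - 1| := by
      rw [Real.norm_eq_abs, abs_mul, abs_of_nonneg htp]
    rw [hnorm]
    rcases lt_or_ge t 1 with h1 | h1
    · have hb := hub t ht0 h1 x y
      have habs : |p t x y - 1| ≤ p t x y + 1 := by
        rw [abs_le]; constructor <;> nlinarith [hnonneg t x y]
      have hE : (0:ℝ) ≤ Real.exp (-c₄ * (dist x y ^ dw / t) ^ (1 / (dw - 1))) :=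
        (Real.exp_pos _).le
      have hpow : t ^ (s - 1) * t ^ (-(dh / dw)) = t ^ (-ν - 1) := by
        rw [← Real.rpow_add ht0]
        congr 1
        rw [hν_def]; ring
      have hf₂t : f₂ t = t ^ (s - 1) := by
        simp only [hf₂_def]
        exact indicator_of_mem (show t ∈ Ioc (0:ℝ) 1 from ⟨ht0, h1.le⟩) _
      have hf₃t : 0 ≤ f₃ t := by simp only [hf₃_def]; positivity
      calc t ^ (s - 1) * |p t x y - 1|
          ≤ t ^ (s - 1) * (p t x y + 1) := mul_le_mul_of_nonneg_left habs htp
        _ = t ^ (s - 1) * p t x y + t ^ (s - 1) := by ring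
        _ ≤ t ^ (s - 1) * (c₃ * t ^ (-(dh / dw)) *
              Real.exp (-c₄ * (dist x y ^ dw / t) ^ (1 / (dw - 1)))) + t ^ (s - 1) := by
            have := mul_le_mul_of_nonneg_left hb htp
            linarith
        _ = c₃ * f₁ t + f₂ t := by
            rw [hf₂t, hf₁_def]
            simp only [hA_def, hγ_def, hr_def]
            rw [← hpow]; ring
        _ ≤ g t := by simp only [hg_def]; linarith
    · have hb := htail t h1 x y
      have hts : t ^ (s - 1) ≤ 1 :=
        Real.rpow_le_one_of_one_le_of_nonpos h1 (by linarith)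
      have hf₁t : 0 ≤ f₁ t := by
        simp only [hf₁_def]; positivity
      calc t ^ (s - 1) * |p t x y - 1|
          ≤ 1 * (C₀ * Real.exp (-lam₁ * t)) :=
            mul_le_mul hts hb (abs_nonneg _) zero_le_one
        _ = f₃ t := by simp only [hf₃_def]; rw [one_mul]
        _ ≤ g t := by
            simp only [hg_def]
            have h2 := hf₂_nonneg t
            have h3 : 0 ≤ c₃ * f₁ t := by positivity
            linarith
  -- integral bounds
  have habs : |∫ t in Ioi (0:ℝ), t ^ (s - 1) * (p t x y - 1)| ≤ ∫ t in Ioi (0:ℝ), g t := by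
    calc |∫ t in Ioi (0:ℝ), t ^ (s - 1) * (p t x y - 1)|
        ≤ ∫ t in Ioi (0:ℝ), ‖t ^ (s - 1) * (p t x y - 1)‖ := by
          simpa [Real.norm_eq_abs] using
            norm_integral_le_integral_norm (μ := volume.restrict (Ioi 0))
              (fun t => t ^ (s - 1) * (p t x y - 1))
      _ ≤ ∫ t in Ioi (0:ℝ), g t :=
          integral_mono_of_nonneg (Filter.Eventually.of_forall fun t => norm_nonneg _)
            hg_int ((ae_restrict_iff' measurableSet_Ioi).2 (Filter.Eventually.of_forall hpt))
  have hval₁ : ∫ t in Ioi (0:ℝ), c₃ * f₁ t = c₃ * (K₁ * r ^ (s * dw - dh)) := by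
    simp only [hf₁_def]
    rw [integral_const_mul, key_value hν hγ hc₄ hA]
    congr 1
    rw [hK₁_def, Real.mul_rpow hc₄.le (Real.rpow_nonneg hA.le γ),
      ← Real.rpow_mul hA.le, hA_def, ← Real.rpow_mul hr.le]
    have : dw * (γ * (-ν / γ)) = s * dw - dh := by
      rw [hν_def]
      field_simp
      ring
    rw [this]; ring
  have hval₂ : ∫ t in Ioi (0:ℝ), f₂ t = 1 / s := by
    simp only [hf₂_def]
    rw [integral_indicator measurableSet_Ioc,
      Measure.restrict_restrict measurableSet_Ioc,
      inter_eq_self_of_subset_left Ioc_subset_Ioi_self,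
      ← intervalIntegral.integral_of_le zero_le_one,
      integral_rpow (Or.inl (by linarith : (-1:ℝ) < s - 1))]
    rw [show s - 1 + 1 = s by ring, Real.one_rpow, Real.zero_rpow hs.ne']
    ring
  have hval₃ : ∫ t in Ioi (0:ℝ), f₃ t = C₀ / lam₁ := by
    simp only [hf₃_def, neg_mul]
    rw [integral_const_mul]
    have h := integral_comp_mul_left_Ioi (fun u => Real.exp (-u)) 0 hlam₁
    simp only [mul_zero, smul_eq_mul, integral_exp_neg_Ioi, neg_zero, Real.exp_zero,
      mul_one] at h
    rw [h, div_eq_mul_inv]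
  have hgval : ∫ t in Ioi (0:ℝ), g t
      = c₃ * (K₁ * r ^ (s * dw - dh)) + 1 / s + C₀ / lam₁ := by
    have hIa : Integrable (fun t => c₃ * f₁ t) (volume.restrict (Ioi 0)) :=
      hI₁.const_mul c₃
    have hIb : Integrable (fun t => c₃ * f₁ t + f₂ t) (volume.restrict (Ioi 0)) := by
      exact hIa.add hI₂.integrableOn
    have hIc : Integrable (fun t => f₃ t) (volume.restrict (Ioi 0)) := hI₃
    simp only [hg_def]
    rw [integral_add hIb hIc, integral_add hIa hI₂.integrableOn, hval₁, hval₂, hval₃]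
  -- conclude
  have hre : D ^ (s * dw - dh) ≤ r ^ (s * dw - dh) :=
    Real.rpow_le_rpow_of_nonpos hr (hrD x y) he.le
  have hDe : D ^ (dh - s * dw) * D ^ (s * dw - dh) = 1 := by
    rw [← Real.rpow_add hD]
    norm_num
  have hK₂le : K₂ ≤ K₂ * D ^ (dh - s * dw) * r ^ (s * dw - dh) := by
    have h1 : (0:ℝ) < D ^ (dh - s * dw) := Real.rpow_pos_of_pos hD _
    calc K₂ = K₂ * (D ^ (dh - s * dw) * D ^ (s * dw - dh)) := by rw [hDe, mul_one]
      _ ≤ K₂ * (D ^ (dh - s * dw) * r ^ (s * dw - dh)) := by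
          apply mul_le_mul_of_nonneg_left _ hK₂.le
          exact mul_le_mul_of_nonneg_left hre h1.le
      _ = K₂ * D ^ (dh - s * dw) * r ^ (s * dw - dh) := by ring
  rw [hG x y]
  rw [abs_mul, abs_of_nonneg (inv_nonneg.2 hΓs.le)]
  calc (Real.Gamma s)⁻¹ * |∫ t in Ioi (0:ℝ), t ^ (s - 1) * (p t x y - 1)|
      ≤ (Real.Gamma s)⁻¹ * (c₃ * (K₁ * r ^ (s * dw - dh)) + 1 / s + C₀ / lam₁) := by
        apply mul_le_mul_of_nonneg_left _ (inv_nonneg.2 hΓs.le)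
        rw [← hgval]; exact habs
    _ ≤ (Real.Gamma s)⁻¹ * ((c₃ * K₁ + K₂ * D ^ (dh - s * dw)) * r ^ (s * dw - dh)) := by
        apply mul_le_mul_of_nonneg_left _ (inv_nonneg.2 hΓs.le)
        rw [show c₃ * (K₁ * r ^ (s * dw - dh)) + 1 / s + C₀ / lam₁
            = c₃ * K₁ * r ^ (s * dw - dh) + K₂ from by rw [hK₂_def]; ring,
          show (c₃ * K₁ + K₂ * D ^ (dh - s * dw)) * r ^ (s * dw - dh)
            = c₃ * K₁ * r ^ (s * dw - dh) + K₂ * D ^ (dh - s * dw) * r ^ (s * dw - dh) from by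
            ring]
        linarith [hK₂le]
    _ = (Real.Gamma s)⁻¹ * (c₃ * K₁ + K₂ * D ^ (dh - s * dw)) * r ^ (s * dw - dh) := by
        ring
end
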